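/- arXiv:1712.06094 — 4 statements merged into one kernel-verified Lean document; each statement's English description precedes it below -/
import Mathlib

section
/- Let K be a field with |K| > 2 and let V be a K-vector space with 3 ≤ dim V < ∞, equipped with a nondegenerate bilinear form B. If there exists a vector v with B(v,v) ≠ 0, then the set {v ∈ V : B(v,v) ≠ 0} spans V; equivalently, the non-isotropic vectors are not all contained in a hyperplane of V. -/
open LinearMap (BilinForm)

/-- Over a field with more than two elements, if `V` has finite dimension at least `3` and
`B` is a nondegenerate bilinear form on `V` admitting at least one non-isotropic vector, then
the non-isotropic vectors span `V` (they are not all contained in a hyperplane). -/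
theorem stmt_5 {K V : Type*} [Field K] [AddCommGroup V] [Module K V] [FiniteDimensional K V]
    (hK : 2 < Cardinal.mk K) (hdim : 3 ≤ Module.finrank K V)
    (B : BilinForm K V) (hnd : B.Nondegenerate)
    (hex : ∃ v : V, B v v ≠ 0) :
    Submodule.span K {v : V | B v v ≠ 0} = ⊤ := by
  obtain ⟨v, hv⟩ := hex
  rw [Submodule.eq_top_iff']
  intro w
  by_cases hw : B w w ≠ 0
  · exact Submodule.subset_span hw
  push_neg at hw
  set a := B v v with ha
  set s := B w v + B v w with hs
  have hT : ∃ t : K, t ≠ 0 ∧ s + t * a ≠ 0 := by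
    by_contra h
    push_neg at h
    have hsub : (Set.univ : Set K) ⊆ {0, -s * a⁻¹} := by
      intro t _
      rcases eq_or_ne t 0 with ht | ht
      · exact Or.inl ht
      · right
        have h1 := h t ht
        have : t * a = -s := by linear_combination h1
        exact (eq_mul_inv_iff_mul_eq₀ hv).mpr this
    have : Cardinal.mk K ≤ 2 := by
      calc Cardinal.mk K = Cardinal.mk (Set.univ : Set K) := Cardinal.mk_univ.symm
        _ ≤ Cardinal.mk ({0, -s * a⁻¹} : Set K) := Cardinal.mk_le_mk_of_subset hsub
        _ ≤ Cardinal.mk ({-s * a⁻¹} : Set K) + 1 := Cardinal.mk_insert_le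
        _ = 2 := by rw [Cardinal.mk_singleton]; norm_num
    exact absurd this (not_le.mpr hK)
  obtain ⟨t, ht0, hts⟩ := hT
  have key : B (w + t • v) (w + t • v) ≠ 0 := by
    have hcalc : B (w + t • v) (w + t • v) = t * (s + t * a) := by
      simp only [map_add, LinearMap.add_apply, map_smul, LinearMap.smul_apply,
        smul_eq_mul, hw, hs, ha]
      ring
    rw [hcalc]
    exact mul_ne_zero ht0 hts
  have hmem1 : (w + t • v) ∈ Submodule.span K {v : V | B v v ≠ 0} :=
    Submodule.subset_span key
  have hmem2 : v ∈ Submodule.span K {v : V | B v v ≠ 0} :=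
    Submodule.subset_span hv
  have : w = (w + t • v) - t • v := by abel
  rw [this]
  exact Submodule.sub_mem _ hmem1 (Submodule.smul_mem _ t hmem2)
end

section
/- Let V be a vector space of finite dimension at least 2 over a field K, with a nondegenerate bilinear form B. If there exists a vector v with B(v,v) ≠ 0, then there exist two linearly independent vectors v₁, v₂ with B(v₁,v₁) ≠ 0 and B(v₂,v₂) ≠ 0. -/
open LinearMap (BilinForm)

/-!
Suppose `B v v ≠ 0` but `B x x = 0` for every `x` off the line `K ∙ v`. Expanding
`B (u + t • v) (u + t • v)` for `u` off the line gives `B u v + B v u = B v v` and `2 = 0`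
in `K`. The linear functional `x ↦ B x v + B v x` thus takes the value `B v v ≠ 0` everywhere
off the line; this forces every nonzero scalar to be `1` and every vector to lie in `K ∙ v` or
in `u + K ∙ v`. So `K = 𝔽₂`, `V = span {v, u}`, and the Gram matrix of `B` in the basis `v, u`
has determinant `a (1 + a) = 0`, where `a = B v u`: the vector `(1 + a) • v + u` is in the
left radical.
-/

namespace LinearMap.BilinForm

variable {K V : Type*} [Field K] [AddCommGroup V] [Module K V]

theorem apply_add_smul_add_smul (B : BilinForm K V) (x v : V) (t : K) :
    B (x + t • v) (x + t • v) = B x x + t * (B x v + B v x) + t ^ 2 * B v v := by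
  simp only [map_add, map_smul, LinearMap.add_apply, LinearMap.smul_apply, smul_eq_mul]
  ring

section IsotropicOffLine

variable {B : BilinForm K V} {v u : V}

theorem mul_add_sq_mul_eq_zero_of_isotropic_off_span (hiso : ∀ x ∉ K ∙ v, B x x = 0)
    (hu : u ∉ K ∙ v) (t : K) : t * (B u v + B v u) + t ^ 2 * B v v = 0 := by
  have hut : u + t • v ∉ K ∙ v := by
    rwa [Submodule.add_mem_iff_left _
      (Submodule.smul_mem _ _ (Submodule.mem_span_singleton_self v))]
  simpa only [apply_add_smul_add_smul, hiso u hu, zero_add] using hiso _ hut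

theorem apply_add_apply_eq_of_isotropic_off_span (hiso : ∀ x ∉ K ∙ v, B x x = 0)
    (hu : u ∉ K ∙ v) : B u v + B v u = B v v := by
  linear_combination -mul_add_sq_mul_eq_zero_of_isotropic_off_span hiso hu (-1)

theorem two_eq_zero_of_isotropic_off_span (hv : B v v ≠ 0) (hiso : ∀ x ∉ K ∙ v, B x x = 0)
    (hu : u ∉ K ∙ v) : (2 : K) = 0 := by
  have h := mul_add_sq_mul_eq_zero_of_isotropic_off_span hiso hu 1
  rw [apply_add_apply_eq_of_isotropic_off_span hiso hu] at h
  exact (mul_eq_zero.mp (by linear_combination h : (2 : K) * B v v = 0)).resolve_right hv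

theorem eq_zero_or_eq_one_of_isotropic_off_span (hv : B v v ≠ 0)
    (hiso : ∀ x ∉ K ∙ v, B x x = 0) (hu : u ∉ K ∙ v) (a : K) : a = 0 ∨ a = 1 := by
  refine or_iff_not_imp_left.mpr fun ha ↦ ?_
  have hau : a • u ∉ K ∙ v := by rwa [Submodule.smul_mem_iff _ ha]
  have h := apply_add_apply_eq_of_isotropic_off_span hiso hau
  simp only [map_smul, LinearMap.smul_apply, smul_eq_mul, ← mul_add,
    apply_add_apply_eq_of_isotropic_off_span hiso hu] at h
  exact (mul_eq_right₀ hv).mp h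

theorem add_mem_span_of_isotropic_off_span (hv : B v v ≠ 0) (hiso : ∀ x ∉ K ∙ v, B x x = 0)
    (hu : u ∉ K ∙ v) {y : V} (hy : y ∉ K ∙ v) : y + u ∈ K ∙ v := by
  by_contra hyu
  have h := apply_add_apply_eq_of_isotropic_off_span hiso hyu
  simp only [map_add, LinearMap.add_apply] at h
  exact hv (by linear_combination h - apply_add_apply_eq_of_isotropic_off_span hiso hu -
    apply_add_apply_eq_of_isotropic_off_span hiso hy)

theorem apply_one_add_smul_add_eq_zero_of_isotropic_off_span (hv : B v v ≠ 0)
    (hiso : ∀ x ∉ K ∙ v, B x x = 0) (hu : u ∉ K ∙ v) (y : V) :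
    B ((1 + B v u) • v + u) y = 0 := by
  have hK := eq_zero_or_eq_one_of_isotropic_off_span hv hiso hu
  have h2 := two_eq_zero_of_isotropic_off_span hv hiso hu
  have hc : B v v = 1 := (hK _).resolve_left hv
  have hp := apply_add_apply_eq_of_isotropic_off_span hiso hu
  set a := B v u
  have ha : a * (a - 1) = 0 := by rcases hK a with h | h <;> simp [h]
  have hxv : B ((1 + a) • v + u) v = 0 := by
    simp only [map_add, map_smul, LinearMap.add_apply, LinearMap.smul_apply, smul_eq_mul]
    linear_combination hp + (2 + a) * hc + h2
  have hxu : B ((1 + a) • v + u) u = 0 := by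
    simp only [map_add, map_smul, LinearMap.add_apply, LinearMap.smul_apply, smul_eq_mul,
      hiso u hu]
    linear_combination ha + a * h2
  by_cases hy : y ∈ K ∙ v
  · obtain ⟨s, rfl⟩ := Submodule.mem_span_singleton.mp hy
    rw [map_smul, smul_eq_mul, hxv, mul_zero]
  · obtain ⟨s, hs⟩ :=
      Submodule.mem_span_singleton.mp (add_mem_span_of_isotropic_off_span hv hiso hu hy)
    rw [eq_sub_of_add_eq hs.symm, map_sub, map_smul, smul_eq_mul, hxv, hxu, mul_zero, sub_zero]

theorem exists_apply_self_ne_zero_notMem_span_singleton (hB : B.SeparatingLeft)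
    (hv : B v v ≠ 0) (hu : u ∉ K ∙ v) : ∃ x ∉ K ∙ v, B x x ≠ 0 := by
  by_contra! hiso
  have hx := hB _ (apply_one_add_smul_add_eq_zero_of_isotropic_off_span hv hiso hu)
  rw [eq_neg_of_add_eq_zero_right hx] at hu
  exact hu (neg_mem (Submodule.smul_mem _ _ (Submodule.mem_span_singleton_self v)))

end IsotropicOffLine

end LinearMap.BilinForm

theorem stmt_6_general {K V : Type*} [Field K] [AddCommGroup V] [Module K V]
    (hdim : 2 ≤ Module.finrank K V)
    (B : BilinForm K V) (hnd : B.Nondegenerate)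
    (hex : ∃ v : V, B v v ≠ 0) :
    ∃ v₁ v₂ : V, LinearIndependent K ![v₁, v₂] ∧ B v₁ v₁ ≠ 0 ∧ B v₂ v₂ ≠ 0 := by
  obtain ⟨v, hv⟩ := hex
  have hv0 : v ≠ 0 := by rintro rfl; simp at hv
  have pair_iff (x : V) : LinearIndependent K ![v, x] ↔ x ∉ K ∙ v := by
    simp [LinearIndependent.pair_iff' hv0, Submodule.mem_span_singleton]
  obtain ⟨u, hvu⟩ := exists_linearIndependent_pair_of_one_lt_finrank hdim hv0
  obtain ⟨x, hx, hxx⟩ :=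
    B.exists_apply_self_ne_zero_notMem_span_singleton hnd.1 hv ((pair_iff u).mp hvu)
  exact ⟨v, x, (pair_iff x).mpr hx, hv, hxx⟩

/-- If `V` has finite dimension at least `2` and `B` is a nondegenerate bilinear form on `V`
with at least one non-isotropic vector, then there are two linearly independent
non-isotropic vectors. -/
theorem stmt_6 {K V : Type*} [Field K] [AddCommGroup V] [Module K V] [FiniteDimensional K V]
    (hdim : 2 ≤ Module.finrank K V)
    (B : BilinForm K V) (hnd : B.Nondegenerate)
    (hex : ∃ v : V, B v v ≠ 0) :
    ∃ v₁ v₂ : V, LinearIndependent K ![v₁, v₂] ∧ B v₁ v₁ ≠ 0 ∧ B v₂ v₂ ≠ 0 :=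
  stmt_6_general hdim B hnd hex
end

section
/- Let V be a vector space of finite dimension m ≥ 4 over a field K, with a nondegenerate bilinear form B. Suppose there exists v₀ ∈ V with B(v₀,v₀) ≠ 0. Then there exist a vector v with B(v,v) ≠ 0 and a hyperplane H ≤ V with v ∈ H, such that the (one-dimensional) right radical R(H) = {w ∈ V : B(x,w) = 0 for all x ∈ H} is not contained in H. -/
/-!
Take `v₀` with `B v₀ v₀ ≠ 0` and let `W` be the set of vectors orthogonal to `v₀` on both sides,
so `dim W ≥ m - 2`. If `B` vanished on `W × W`, then `W` would be right-orthogonal to the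
`(dim W + 1)`-dimensional space `W + K v₀`, forcing `2 dim W + 1 ≤ m` by nondegeneracy, which is
impossible for `m ≥ 4`. So there are `x, y ∈ W` with `B x y ≠ 0`. Either `x` or `y` is itself
anisotropic (and orthogonal to `v₀`), or `v₀ + c x` and `v₀ + y` are anisotropic and orthogonal
for a suitable scalar `c`. Given anisotropic `v, w` with `B v w = 0`, the hyperplane
`H = {x | B x w = 0}` contains `v`, and `w ∈ R(H) \ H`.
-/

open LinearMap (BilinForm)
open Module Submodule

namespace LinearMap.BilinForm

variable {K V : Type*} [Field K] [AddCommGroup V] [Module K V] {B : BilinForm K V}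

lemma mem_orthogonal_span_singleton_iff {v x : V} : x ∈ B.orthogonal (K ∙ v) ↔ B v x = 0 := by
  refine ⟨fun h ↦ h v (mem_span_singleton_self v), fun h n hn ↦ ?_⟩
  obtain ⟨a, rfl⟩ := mem_span_singleton.1 hn
  simp [h]

lemma exists_anisotropic_orthogonal_pair_of_isotropic {v x y : V} (hv : B v v ≠ 0)
    (hvx : B v x = 0) (hxv : B x v = 0) (hvy : B v y = 0) (hyv : B y v = 0)
    (hx : B x x = 0) (hy : B y y = 0) (hxy : B x y ≠ 0) :
    ∃ v' w : V, B v' v' ≠ 0 ∧ B w w ≠ 0 ∧ B v' w = 0 := by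
  refine ⟨v + (-B v v / B x y) • x, v + y, ?_, ?_, ?_⟩ <;>
    simp only [map_add, map_smul, LinearMap.add_apply, LinearMap.smul_apply, smul_eq_mul,
      hvx, hxv, hvy, hyv, hx, hy, mul_zero, add_zero]
  · exact hv
  · exact hv
  · field_simp
    ring

variable [FiniteDimensional K V]

lemma finrank_add_finrank_le_of_le_orthogonal (hB : B.Nondegenerate) {U W : Submodule K V}
    (h : W ≤ B.orthogonal U) : finrank K U + finrank K W ≤ finrank K V := by
  have hW := finrank_mono h
  rw [finrank_orthogonal hB] at hW
  have hU := Submodule.finrank_le U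
  omega

lemma finrank_le_finrank_orthogonal_inf_flip_orthogonal_add_two (hB : B.Nondegenerate)
    {v : V} (hv : v ≠ 0) :
    finrank K V ≤ finrank K ↥(B.orthogonal (K ∙ v) ⊓ B.flip.orthogonal (K ∙ v)) + 2 := by
  have hsum := finrank_sup_add_finrank_inf_eq (B.orthogonal (K ∙ v)) (B.flip.orthogonal (K ∙ v))
  have hsup := Submodule.finrank_le (B.orthogonal (K ∙ v) ⊔ B.flip.orthogonal (K ∙ v))
  rw [finrank_orthogonal hB, finrank_orthogonal hB.flip, finrank_span_singleton hv] at hsum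
  omega

lemma exists_apply_ne_zero_of_mem_orthogonal_inf_flip_orthogonal (hB : B.Nondegenerate)
    (hdim : 4 ≤ finrank K V) {v : V} (hv : B v v ≠ 0) :
    ∃ x ∈ B.orthogonal (K ∙ v) ⊓ B.flip.orthogonal (K ∙ v),
      ∃ y ∈ B.orthogonal (K ∙ v) ⊓ B.flip.orthogonal (K ∙ v), B x y ≠ 0 := by
  set W := B.orthogonal (K ∙ v) ⊓ B.flip.orthogonal (K ∙ v)
  by_contra! hW
  have hvW : v ∉ W := fun h ↦ hv (mem_orthogonal_span_singleton_iff.1 h.1)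
  have hle : W ≤ B.orthogonal (W ⊔ K ∙ v) := by
    intro y hy z hz
    obtain ⟨x, hx, u, hu, rfl⟩ := mem_sup.1 hz
    rw [LinearMap.map_add₂, hW x hx y hy, hy.1 u hu, add_zero]
  have hbound := finrank_add_finrank_le_of_le_orthogonal hB hle
  rw [finrank_sup_span_singleton hvW] at hbound
  have hW2 : finrank K V ≤ finrank K W + 2 :=
    finrank_le_finrank_orthogonal_inf_flip_orthogonal_add_two hB fun h ↦ hv (by simp [h])
  omega

lemma exists_anisotropic_orthogonal_pair (hB : B.Nondegenerate) (hdim : 4 ≤ finrank K V)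
    {v : V} (hv : B v v ≠ 0) : ∃ v' w : V, B v' v' ≠ 0 ∧ B w w ≠ 0 ∧ B v' w = 0 := by
  obtain ⟨x, hx, y, hy, hxy⟩ :=
    exists_apply_ne_zero_of_mem_orthogonal_inf_flip_orthogonal hB hdim hv
  have hvx : B v x = 0 := mem_orthogonal_span_singleton_iff.1 hx.1
  have hxv : B x v = 0 := (mem_orthogonal_span_singleton_iff (B := B.flip)).1 hx.2
  have hvy : B v y = 0 := mem_orthogonal_span_singleton_iff.1 hy.1
  have hyv : B y v = 0 := (mem_orthogonal_span_singleton_iff (B := B.flip)).1 hy.2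
  by_cases hxx : B x x = 0
  · by_cases hyy : B y y = 0
    · exact exists_anisotropic_orthogonal_pair_of_isotropic hv hvx hxv hvy hyv hxx hyy hxy
    · exact ⟨y, v, hyy, hv, hyv⟩
  · exact ⟨x, v, hxx, hv, hxv⟩

end LinearMap.BilinForm

open LinearMap.BilinForm in
/-- If `V` has finite dimension `m ≥ 4` with a nondegenerate bilinear form `B` admitting a
non-isotropic vector, then there exist a non-isotropic vector `v` and a hyperplane `H`
containing `v` whose right radical `R(H) = {w | ∀ x ∈ H, B x w = 0}` is not contained
in `H`. -/
theorem stmt_7 {K V : Type*} [Field K] [AddCommGroup V] [Module K V] [FiniteDimensional K V]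
    (hdim : 4 ≤ Module.finrank K V)
    (B : BilinForm K V) (hnd : B.Nondegenerate)
    (hex : ∃ v₀ : V, B v₀ v₀ ≠ 0) :
    ∃ (v : V) (H : Submodule K V),
      B v v ≠ 0 ∧ v ∈ H ∧ Module.finrank K H = Module.finrank K V - 1 ∧
        ∃ w : V, (∀ x ∈ H, B x w = 0) ∧ w ∉ H := by
  obtain ⟨v₀, hv₀⟩ := hex
  obtain ⟨v, w, hv, hw, hvw⟩ := exists_anisotropic_orthogonal_pair hnd hdim hv₀
  have hmem : ∀ x, x ∈ B.flip.orthogonal (K ∙ w) ↔ B x w = 0 := fun x ↦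
    mem_orthogonal_span_singleton_iff
  have hw0 : w ≠ 0 := fun h ↦ hw (by simp [h])
  refine ⟨v, B.flip.orthogonal (K ∙ w), hv, (hmem v).2 hvw, ?_, w, fun x hx ↦ (hmem x).1 hx,
    fun h ↦ hw ((hmem w).1 h)⟩
  rw [finrank_orthogonal hnd.flip, finrank_span_singleton hw0]
end

section
/- Let V = K^{2n} with n ≥ 3, K a field, and B a nondegenerate alternating bilinear form on V. Let L ≤ V be a totally isotropic 2-dimensional subspace, and let x ∈ V be a nonzero vector such that the set of points of L collinear with ⟨x⟩ is exactly the single point ⟨y⟩ (i.e. {w ∈ L : B(x,w) = 0} = span(y) with y ≠ 0). Let K' ≤ V be a totally isotropic 2-dimensional subspace with K' ∩ L = {0}, such that B(x,·) does not vanish identically on K', and such that, writing ⟨z⟩ for the unique point of K' collinear with ⟨x⟩ (i.e. {w ∈ K' : B(x,w)=0} = span(z)), one has B(y,z) ≠ 0. Then there exists a nonzero vector u ∈ V with B(u,w) = 0 for all w ∈ K', B(u,y) = 0, and B(u,w') ≠ 0 for some w' ∈ L. -/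
open LinearMap (BilinForm)

/-- A rank-`≥ 3` symplectic polar space lemma: let `L` be a line (totally isotropic `2`-space),
`x` a nonzero vector collinear with exactly the point `⟨y⟩` of `L`, and `K'` a line disjoint
from `L`, not coplanar with `x`, such that the unique point `⟨z⟩` of `K'` collinear with `x`
is not collinear with `y`. Then there is a point `⟨u⟩` collinear with all points of `K'`,
collinear with `y`, but not collinear with all points of `L`. -/
theorem stmt_10 {F V : Type*} [Field F] [AddCommGroup V] [Module F V] [FiniteDimensional F V]
    (n : ℕ) (hn : 3 ≤ n) (hdim : Module.finrank F V = 2 * n)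
    (B : BilinForm F V) (halt : ∀ v : V, B v v = 0) (hnd : B.Nondegenerate)
    (L : Submodule F V) (hL : Module.finrank F L = 2)
    (hLiso : ∀ u ∈ L, ∀ u' ∈ L, B u u' = 0)
    (x : V) (hx : x ≠ 0)
    (y : V) (hy0 : y ≠ 0)
    (hxy : {w : V | w ∈ L ∧ B x w = 0} = {w : V | w ∈ Submodule.span F {y}})
    (K' : Submodule F V) (hK' : Module.finrank F K' = 2)
    (hK'iso : ∀ u ∈ K', ∀ u' ∈ K', B u u' = 0)
    (hKL : K' ⊓ L = ⊥)
    (hxK' : ¬ ∀ w ∈ K', B x w = 0)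
    (z : V) (hz0 : z ≠ 0)
    (hxz : {w : V | w ∈ K' ∧ B x w = 0} = {w : V | w ∈ Submodule.span F {z}})
    (hyz : B y z ≠ 0) :
    ∃ u : V, u ≠ 0 ∧ (∀ w ∈ K', B u w = 0) ∧ B u y = 0 ∧ ∃ w' ∈ L, B u w' ≠ 0 := by
  -- `y ∈ L`
  have hyL : y ∈ L := by
    have : y ∈ {w : V | w ∈ L ∧ B x w = 0} := by
      rw [hxy]; exact Submodule.mem_span_singleton_self y
    exact this.1
  set S : Submodule F V := K' ⊔ Submodule.span F {y} with hS
  -- `L ⊓ S ≤ span y`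
  have hLS : L ⊓ S ≤ Submodule.span F {y} := by
    rintro v ⟨hvL, hvS⟩
    obtain ⟨k, hk, w, hw, rfl⟩ := Submodule.mem_sup.mp hvS
    obtain ⟨t, rfl⟩ := Submodule.mem_span_singleton.mp hw
    have hkL : k ∈ L := by
      have : k = k + t • y - t • y := by abel
      rw [this]
      exact Submodule.sub_mem _ hvL (Submodule.smul_mem _ _ hyL)
    have : k ∈ K' ⊓ L := ⟨hk, hkL⟩
    rw [hKL] at this
    simp only [Submodule.mem_bot] at this
    subst this
    simpa using Submodule.smul_mem _ t (Submodule.mem_span_singleton_self y)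
  -- find `w' ∈ L` with `w' ∉ S`
  have hnotle : ¬ L ≤ S := by
    intro hle
    have h1 : L ≤ Submodule.span F {y} := fun v hv => hLS ⟨hv, hle hv⟩
    have := Submodule.finrank_mono h1
    rw [hL, finrank_span_singleton hy0] at this
    omega
  obtain ⟨w', hw'L, hw'S⟩ := SetLike.not_le_iff_exists.mp hnotle
  -- a functional vanishing on `S` but not at `w'`
  obtain ⟨f, hf0, hfS⟩ := Submodule.exists_dual_map_eq_bot_of_notMem hw'S inferInstance
  have hfvanish : ∀ v ∈ S, f v = 0 := by
    intro v hv
    have : f v ∈ S.map f := Submodule.mem_map_of_mem hv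
    rwa [hfS, Submodule.mem_bot] at this
  refine ⟨(B.toDual hnd).symm f, ?_, ?_, ?_, w', hw'L, ?_⟩
  · intro h
    apply hf0
    have := LinearMap.BilinForm.apply_toDual_symm_apply (B := B) (hB := hnd) f w'
    rwa [h, map_zero, LinearMap.zero_apply, eq_comm] at this
  · intro w hw
    rw [LinearMap.BilinForm.apply_toDual_symm_apply]
    exact hfvanish w (Submodule.mem_sup_left hw)
  · rw [LinearMap.BilinForm.apply_toDual_symm_apply]
    exact hfvanish y (Submodule.mem_sup_right (Submodule.mem_span_singleton_self y))
  · rw [LinearMap.BilinForm.apply_toDual_symm_apply]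
    exact hf0
end
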